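/- arXiv:1611.02219 — 3 statements merged into one kernel-verified Lean document; each statement's English description precedes it below -/
import Mathlib

section
/- Membership of the interpolant in the cone: assume ‖λ_k‖_{X'} ≤ 1 for 1 ≤ k ≤ n, and let S ⊂ X satisfy sup_{g∈S} dist(g, X_k) ≤ ε_k for 0 ≤ k ≤ n−1, with ε_0 := sup_{g∈S} ‖g‖_X. Then for every f ∈ S, the unique coefficients (c_1,…,c_n) in the expansion J_n(f) = Σ_{i=1}^n c_i q_i satisfy |c_i| ≤ (1 + Λ_{i-1}) ε_{i-1} for every 1 ≤ i ≤ n; that is, J_n(f) ∈ K_n(1). -/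
/-!
Unitriangularity of `λ_j(q_i)` means an element of `X_k` is determined by `λ_0, …, λ_{k-1}`.
Hence `J_k` fixes `X_k`, and `J_k f` is the truncation `∑_{j<k} c_j q_j` of `J_n f`, so that
`c_k = λ_k (f - J_k f)`. As `‖λ_k‖ ≤ 1`, `|c_k| ≤ ‖f - J_k f‖`, and a projection onto `X_k` of
norm `Λ_k` satisfies `‖f - J_k f‖ ≤ (1 + Λ_k) dist(f, X_k)`.
-/

open Finset Submodule

section Unitriangular

variable {ι R X F : Type*} [LinearOrder ι] [Ring R] [AddCommGroup X] [Module R X]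
  [FunLike F X R] [LinearMapClass F R X R] {q : ι → X} {lam : ι → F}

theorem eq_zero_of_mem_span_of_forall_apply_eq_zero [WellFoundedLT ι]
    (hbio : ∀ i j, j ≤ i → lam j (q i) = if i = j then 1 else 0) {s : Set ι} {w : X}
    (hw : w ∈ span R (q '' s)) (hlam : ∀ m ∈ s, lam m w = 0) : w = 0 := by
  obtain ⟨l, hls, rfl⟩ := (Finsupp.mem_span_image_iff_linearCombination R).mp hw
  suffices l = 0 by simp [this]
  ext j
  induction j using WellFoundedLT.induction with
  | _ j ih =>
    by_cases hj : j ∈ s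
    swap
    · exact Finsupp.notMem_support_iff.mp fun hl => hj (hls hl)
    have hcoord : lam j (Finsupp.linearCombination R q l) = l j := by
      rw [Finsupp.linearCombination_apply, map_finsuppSum]
      refine (Finsupp.sum_eq_single j (fun b _ hbj => ?_) (by simp)).trans (by simp [hbio j j le_rfl])
      rcases lt_or_gt_of_ne hbj with hb | hb
      · simp [ih b hb]
      · simp [hbio b j hb.le, hbj]
    simpa [hcoord] using hlam j hj

theorem eq_of_mem_span_of_forall_apply_eq [WellFoundedLT ι]
    (hbio : ∀ i j, j ≤ i → lam j (q i) = if i = j then 1 else 0) {s : Set ι} {v w : X}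
    (hv : v ∈ span R (q '' s)) (hw : w ∈ span R (q '' s))
    (hlam : ∀ m ∈ s, lam m v = lam m w) : v = w :=
  sub_eq_zero.mp <| eq_zero_of_mem_span_of_forall_apply_eq_zero hbio (sub_mem hv hw)
    fun m hm => by rw [map_sub, hlam m hm, sub_self]

theorem apply_sum_smul_of_forall_le [DecidableEq ι]
    (hbio : ∀ i j, j ≤ i → lam j (q i) = if i = j then 1 else 0) {t : Finset ι} {m : ι}
    (c : ι → R) (ht : ∀ j ∈ t, m ≤ j) :
    lam m (∑ j ∈ t, c j • q j) = if m ∈ t then c m else 0 := by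
  rw [map_sum, ← sum_ite_eq' t m c]
  refine sum_congr rfl fun j hj => ?_
  rw [map_smul, hbio j m (ht j hj), smul_eq_mul, mul_ite, mul_one, mul_zero]

theorem coeff_eq_apply_sub_of_interpolates [Fintype ι]
    (hbio : ∀ i j, j ≤ i → lam j (q i) = if i = j then 1 else 0) {c : ι → R} {f v : X} {i : ι}
    (hv : v ∈ span R (q '' Set.Iio i)) (hvf : ∀ m < i, lam m v = lam m f)
    (hc : ∀ m ≤ i, lam m (∑ j, c j • q j) = lam m f) : c i = lam i (f - v) := by
  classical
  set g := ∑ j with j < i, c j • q j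
  set tail := ∑ j with ¬j < i, c j • q j
  have hsplit : ∑ j, c j • q j = g + tail := (sum_filter_add_sum_filter_not _ _ _).symm
  have htail (m : ι) (hm : m ≤ i) : lam m tail = if m = i then c i else 0 := by
    rw [apply_sum_smul_of_forall_le hbio c fun j hj => hm.trans (not_lt.mp (mem_filter.mp hj).2)]
    by_cases hmi : m = i <;> simp [hmi, hm.lt_of_ne]
  have hg : g ∈ span R (q '' Set.Iio i) :=
    sum_mem fun j hj => smul_mem _ _ (subset_span ⟨j, (mem_filter.mp hj).2, rfl⟩)
  have hvg : v = g := eq_of_mem_span_of_forall_apply_eq hbio hv hg fun m hm => by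
    have := hc m hm.le
    rw [hsplit, map_add, htail m hm.le, if_neg hm.ne, add_zero] at this
    rw [hvf m hm, this]
  have := hc i le_rfl
  rw [hsplit, map_add, htail i le_rfl, if_pos rfl] at this
  rw [map_sub, ← this, hvg, add_sub_cancel_left]

end Unitriangular

theorem norm_sub_apply_le_mul_infDist {𝕜 X : Type*} [NontriviallyNormedField 𝕜]
    [SeminormedAddCommGroup X] [NormedSpace 𝕜 X] (P : X →L[𝕜] X) {V : Submodule 𝕜 X}
    (hP : ∀ v ∈ V, P v = v) (f : X) : ‖f - P f‖ ≤ (1 + ‖P‖) * Metric.infDist f V := by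
  have hpos : 0 < 1 + ‖P‖ := by positivity
  rw [← div_le_iff₀' hpos, Metric.le_infDist ⟨0, V.zero_mem⟩]
  intro v hv
  rw [div_le_iff₀' hpos, dist_eq_norm]
  calc ‖f - P f‖ = ‖(f - v) - P (f - v)‖ := by rw [map_sub, hP v hv, sub_sub_sub_cancel_right]
    _ ≤ ‖f - v‖ + ‖P‖ * ‖f - v‖ := (norm_sub_le _ _).trans (add_le_add_right (P.le_opNorm _) _)
    _ = (1 + ‖P‖) * ‖f - v‖ := by ring

theorem geim_interpolant_in_cone_general
    {X : Type*} [NormedAddCommGroup X] [NormedSpace ℝ X]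
    (n : ℕ) (q : Fin n → X) (lam : Fin n → X →L[ℝ] ℝ)
    (hlam : ∀ i : Fin n, ‖lam i‖ ≤ 1)
    (hbio : ∀ i j : Fin n, j ≤ i → lam j (q i) = if i = j then 1 else 0)
    (J : ℕ → X →L[ℝ] X)
    (hrange : ∀ k, k ≤ n → ∀ f : X,
      J k f ∈ Submodule.span ℝ (q '' {i : Fin n | (i : ℕ) < k}))
    (hinterp : ∀ k, k ≤ n → ∀ f : X, ∀ i : Fin n, (i : ℕ) < k →
      lam i (J k f) = lam i f)
    (S : Set X) (ε : ℕ → ℝ)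
    (hε0 : ∀ g ∈ S, ‖g‖ ≤ ε 0)
    (hεk : ∀ k, 1 ≤ k → k ≤ n - 1 → ∀ g ∈ S,
      Metric.infDist g (Submodule.span ℝ (q '' {i : Fin n | (i : ℕ) < k}) : Set X) ≤ ε k)
    (f : X) (hf : f ∈ S) (c : Fin n → ℝ)
    (hc : J n f = ∑ i : Fin n, c i • q i) :
    ∀ i : Fin n, |c i| ≤ (1 + ‖J (i : ℕ)‖) * ε (i : ℕ) := by
  intro i
  have hk : (i : ℕ) ≤ n := i.isLt.le
  have hfix : ∀ v ∈ span ℝ (q '' {j : Fin n | (j : ℕ) < i}), J i v = v := fun v hv =>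
    eq_of_mem_span_of_forall_apply_eq hbio (hrange i hk v) hv fun m hm => hinterp i hk v m hm
  have hdist : Metric.infDist f (span ℝ (q '' {j : Fin n | (j : ℕ) < i}) : Set X) ≤ ε i := by
    rcases Nat.eq_zero_or_pos (i : ℕ) with h0 | hpos
    · rw [h0]
      exact ((Metric.infDist_le_dist_of_mem (zero_mem _)).trans_eq (dist_zero_right f)).trans
        (hε0 f hf)
    · exact hεk i hpos (Nat.le_sub_one_of_lt i.isLt) f hf
  have hci : c i = lam i (f - J i f) :=
    coeff_eq_apply_sub_of_interpolates hbio (hrange i hk f) (hinterp i hk f) fun m _ => by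
      rw [← hc, hinterp n le_rfl f m m.isLt]
  calc |c i| = ‖lam i (f - J i f)‖ := by rw [hci, Real.norm_eq_abs]
    _ ≤ ‖f - J i f‖ := by simpa using (lam i).le_of_opNorm_le (hlam i) (f - J i f)
    _ ≤ (1 + ‖J i‖) * Metric.infDist f (span ℝ (q '' {j : Fin n | (j : ℕ) < i})) :=
      norm_sub_apply_le_mul_infDist (J i) hfix f
    _ ≤ (1 + ‖J i‖) * ε i := by gcongr

/-- Membership of the interpolant in the cone: assuming `‖λ_k‖ ≤ 1` and
`sup_{g∈S} dist(g, X_k) ≤ ε_k` for `0 ≤ k ≤ n−1` (with `ε₀ = sup_{g∈S} ‖g‖`), for every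
`f ∈ S` the unique coefficients of the expansion `Jₙ(f) = Σᵢ cᵢ qᵢ` satisfy
`|cᵢ| ≤ (1 + Λ_{i-1}) ε_{i-1}` for all `1 ≤ i ≤ n`, i.e. `Jₙ(f) ∈ Kₙ(1)`.
(Indices here are 0-based: the `i`-th coefficient `c i` for `i : Fin n` is bounded by
`(1 + ‖J i‖) ε i`, with `Λ₀ = ‖J 0‖ = 0`.) -/
theorem geim_interpolant_in_cone
    {X : Type*} [NormedAddCommGroup X] [NormedSpace ℝ X] [CompleteSpace X]
    (n : ℕ) (q : Fin n → X) (lam : Fin n → X →L[ℝ] ℝ)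
    (hlam : ∀ i : Fin n, ‖lam i‖ ≤ 1)
    (hbio : ∀ i j : Fin n, j ≤ i → lam j (q i) = if i = j then 1 else 0)
    (J : ℕ → X →L[ℝ] X)
    (hJ0 : J 0 = 0)
    (hrange : ∀ k, k ≤ n → ∀ f : X,
      J k f ∈ Submodule.span ℝ (q '' {i : Fin n | (i : ℕ) < k}))
    (hinterp : ∀ k, k ≤ n → ∀ f : X, ∀ i : Fin n, (i : ℕ) < k →
      lam i (J k f) = lam i f)
    (S : Set X) (ε : ℕ → ℝ)
    (hε0 : ∀ g ∈ S, ‖g‖ ≤ ε 0)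
    (hεk : ∀ k, 1 ≤ k → k ≤ n - 1 → ∀ g ∈ S,
      Metric.infDist g (Submodule.span ℝ (q '' {i : Fin n | (i : ℕ) < k}) : Set X) ≤ ε k)
    (f : X) (hf : f ∈ S) (c : Fin n → ℝ)
    (hc : J n f = ∑ i : Fin n, c i • q i) :
    ∀ i : Fin n, |c i| ≤ (1 + ‖J (i : ℕ)‖) * ε (i : ℕ) :=
  geim_interpolant_in_cone_general n q lam hlam hbio J hrange hinterp S ε hε0 hεk f hf c hc
end

section
/- The optimal value of the CS-GEIM least-squares problem is controlled by the noise: assume ‖λ_k‖_{X'} ≤ 1 for 1 ≤ k ≤ n, let f ∈ S where sup_{g∈S} dist(g, X_k) ≤ ε_k for 0 ≤ k ≤ n−1 (ε_0 := sup_{g∈S} ‖g‖_X), let α ≥ 1, and let the noisy data be η_i = λ_i(f) + e_i for 1 ≤ i ≤ n with arbitrary reals e_i. Then min_{v ∈ K_n(α)} Σ_{i=1}^n (λ_i(v) − η_i)² ≤ Σ_{i=1}^n e_i². -/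
/-!
Take `v = Jₙ f`. Interpolation gives `λᵢ v = λᵢ f`, so the residual of `v` is exactly the noise
`e`. Since the system `λⱼ (qᵢ) = δᵢⱼ` (`j ≤ i`) is unitriangular, an element of `Xₖ` is determined
by its first `k` functionals; this forces `J_{k+1} f - Jₖ f = λₖ (f - Jₖ f) qₖ`, so the
coefficients of `v` are `cᵢ = λᵢ (f - Jᵢ f)`. As `Jᵢ` fixes `Xᵢ` and `‖λᵢ‖ ≤ 1`,
`|cᵢ| ≤ ‖f - Jᵢ f‖ ≤ (1 + Λᵢ) dist(f, Xᵢ) ≤ (1 + Λᵢ) εᵢ`, hence `v ∈ Kₙ(α)`.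
-/

section Span

variable (R : Type*) {X : Type*} [Semiring R] [AddCommMonoid X] [Module R X] {n : ℕ}

/-- The paper's `Xₖ = span {q₁, …, qₖ}`, with `0`-based indices. -/
abbrev spanBelow (q : Fin n → X) (k : ℕ) : Submodule R X :=
  Submodule.span R (q '' {i | (i : ℕ) < k})

variable {R}

lemma spanBelow_mono (q : Fin n → X) : Monotone (spanBelow R q) :=
  fun _ _ hkl => Submodule.span_mono <| Set.image_mono fun _ hi => lt_of_lt_of_le hi hkl

lemma mem_spanBelow_of_lt (q : Fin n → X) {i : Fin n} {k : ℕ} (hik : (i : ℕ) < k) :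
    q i ∈ spanBelow R q k :=
  Submodule.subset_span ⟨i, hik, rfl⟩

end Span

section Triangular

variable {R X : Type*} [Ring R] [TopologicalSpace R] [AddCommGroup X] [TopologicalSpace X]
  [Module R X] {n : ℕ} {q : Fin n → X} {lam : Fin n → X →L[R] R}

lemma apply_sum_smul_of_forall_lt_eq_zero
    (hbio : ∀ i j : Fin n, j ≤ i → lam j (q i) = if i = j then 1 else 0)
    {a : Fin n → R} {j : Fin n} (ha : ∀ i < j, a i = 0) :
    lam j (∑ i, a i • q i) = a j := by
  rw [map_sum, Finset.sum_eq_single j]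
  · simp [hbio j j le_rfl]
  · intro i _ hij
    rcases lt_or_gt_of_ne hij with hlt | hgt
    · simp [ha i hlt]
    · simp [hbio i j hgt.le, hij]
  · simp

lemma eq_zero_of_mem_spanBelow
    (hbio : ∀ i j : Fin n, j ≤ i → lam j (q i) = if i = j then 1 else 0)
    {k : ℕ} {w : X} (hw : w ∈ spanBelow R q k) (hvan : ∀ i : Fin n, (i : ℕ) < k → lam i w = 0) :
    w = 0 := by
  obtain ⟨a, ha, rfl⟩ := (Finsupp.mem_span_image_iff_linearCombination R).1 hw
  rw [Finsupp.linearCombination_apply, Finsupp.sum_fintype _ _ fun _ => zero_smul R (q _)]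
    at hvan ⊢
  suffices a = 0 by simp [this]
  ext j
  induction j using WellFoundedLT.induction with
  | ind j ih =>
    by_cases hjk : (j : ℕ) < k
    · rw [← apply_sum_smul_of_forall_lt_eq_zero hbio ih]
      exact hvan j hjk
    · exact Finsupp.notMem_support_iff.1 fun hj => hjk (ha hj)

lemma eq_of_mem_spanBelow
    (hbio : ∀ i j : Fin n, j ≤ i → lam j (q i) = if i = j then 1 else 0)
    {k : ℕ} {x y : X} (hx : x ∈ spanBelow R q k) (hy : y ∈ spanBelow R q k)
    (hxy : ∀ i : Fin n, (i : ℕ) < k → lam i x = lam i y) : x = y :=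
  sub_eq_zero.1 <| eq_zero_of_mem_spanBelow hbio (sub_mem hx hy) fun i hi => by
    rw [map_sub, hxy i hi, sub_self]

lemma apply_eq_self_of_mem_spanBelow
    (hbio : ∀ i j : Fin n, j ≤ i → lam j (q i) = if i = j then 1 else 0)
    {k : ℕ} {P : X →L[R] X} (hrange : ∀ f, P f ∈ spanBelow R q k)
    (hinterp : ∀ f, ∀ i : Fin n, (i : ℕ) < k → lam i (P f) = lam i f)
    {w : X} (hw : w ∈ spanBelow R q k) : P w = w :=
  eq_of_mem_spanBelow hbio (hrange w) hw (hinterp w)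

lemma apply_eq_sum_residual_smul
    (hbio : ∀ i j : Fin n, j ≤ i → lam j (q i) = if i = j then 1 else 0)
    {J : ℕ → X →L[R] X} (hJ0 : J 0 = 0)
    (hrange : ∀ k, k ≤ n → ∀ f : X, J k f ∈ spanBelow R q k)
    (hinterp : ∀ k, k ≤ n → ∀ f : X, ∀ i : Fin n, (i : ℕ) < k → lam i (J k f) = lam i f)
    (f : X) {k : ℕ} (hk : k ≤ n) :
    J k f = ∑ i : Fin n with i.val < k, lam i (f - J i f) • q i := by
  induction k with
  | zero => simp [hJ0]
  | succ k ih =>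
    let jk : Fin n := ⟨k, hk⟩
    have hfilter : Finset.univ.filter (fun i : Fin n => i.val < k + 1) =
        insert jk (Finset.univ.filter fun i : Fin n => i.val < k) := by
      ext i
      simp only [Finset.mem_filter, Finset.mem_univ, true_and, Finset.mem_insert, Fin.ext_iff, jk]
      omega
    rw [hfilter, Finset.sum_insert (by simp [jk]), ← ih (by omega)]
    refine eq_of_mem_spanBelow hbio (hrange _ hk f) ?_ fun i hi => ?_
    · exact add_mem (Submodule.smul_mem _ _ (mem_spanBelow_of_lt q (by simp [jk])))
        (spanBelow_mono q k.le_succ (hrange k (by omega) f))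
    · rw [hinterp _ hk f i hi, map_add, map_smul, smul_eq_mul]
      rcases Nat.lt_succ_iff_lt_or_eq.1 hi with hlt | heq
      · rw [hinterp k (by omega) f i hlt, hbio jk i (Fin.le_def.2 hlt.le),
          if_neg (Fin.lt_def.2 hlt).ne', mul_zero, zero_add]
      · rw [show i = jk from Fin.ext heq, hbio jk jk le_rfl, if_pos rfl, mul_one, map_sub,
          sub_add_cancel]

end Triangular

lemma norm_sub_apply_le_one_add_opNorm_mul_infDist {𝕜 X : Type*} [NontriviallyNormedField 𝕜]
    [NormedAddCommGroup X] [NormedSpace 𝕜 X] (P : X →L[𝕜] X) {s : Set X} (hs : s.Nonempty)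
    (hP : ∀ w ∈ s, P w = w) (f : X) :
    ‖f - P f‖ ≤ (1 + ‖P‖) * Metric.infDist f s := by
  have hM : 0 < 1 + ‖P‖ := by positivity
  rw [← div_le_iff₀' hM, Metric.le_infDist hs]
  intro w hw
  rw [div_le_iff₀' hM, dist_eq_norm]
  calc ‖f - P f‖ = ‖(f - w) - P (f - w)‖ := by rw [map_sub, hP w hw, sub_sub_sub_cancel_right]
    _ ≤ ‖f - w‖ + ‖P (f - w)‖ := norm_sub_le _ _
    _ ≤ (1 + ‖P‖) * ‖f - w‖ := by linarith [P.le_opNorm (f - w)]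

theorem csgeim_optimal_value_noise_bound_general
    {X : Type*} [NormedAddCommGroup X] [NormedSpace ℝ X]
    (n : ℕ) (q : Fin n → X) (lam : Fin n → X →L[ℝ] ℝ)
    (hlam : ∀ i : Fin n, ‖lam i‖ ≤ 1)
    (hbio : ∀ i j : Fin n, j ≤ i → lam j (q i) = if i = j then 1 else 0)
    (J : ℕ → X →L[ℝ] X)
    (hJ0 : J 0 = 0)
    (hrange : ∀ k, k ≤ n → ∀ f : X,
      J k f ∈ Submodule.span ℝ (q '' {i : Fin n | (i : ℕ) < k}))
    (hinterp : ∀ k, k ≤ n → ∀ f : X, ∀ i : Fin n, (i : ℕ) < k →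
      lam i (J k f) = lam i f)
    (S : Set X) (ε : ℕ → ℝ)
    (hε0 : ∀ g ∈ S, ‖g‖ ≤ ε 0)
    (hεk : ∀ k, 1 ≤ k → k ≤ n - 1 → ∀ g ∈ S,
      Metric.infDist g (Submodule.span ℝ (q '' {i : Fin n | (i : ℕ) < k}) : Set X) ≤ ε k)
    (α : ℝ) (hα : 1 ≤ α)
    (f : X) (hf : f ∈ S) (e η : Fin n → ℝ)
    (hη : ∀ i : Fin n, η i = lam i f + e i)
    (K : Set X)
    (hK : K = {v : X | ∃ c : Fin n → ℝ,
      (∀ i : Fin n, |c i| ≤ α * ((1 + ‖J (i : ℕ)‖) * ε (i : ℕ))) ∧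
      v = ∑ i : Fin n, c i • q i}) :
    ∃ v ∈ K, ∑ i : Fin n, (lam i v - η i) ^ 2 ≤ ∑ i : Fin n, (e i) ^ 2 := by
  have hfix (i : Fin n) : ∀ w ∈ spanBelow ℝ q i, J i w = w := fun _ =>
    apply_eq_self_of_mem_spanBelow hbio (hrange i i.is_lt.le) (hinterp i i.is_lt.le)
  have hdist (i : Fin n) : Metric.infDist f (spanBelow ℝ q i) ≤ ε i := by
    rcases Nat.eq_zero_or_pos i with h0 | hpos
    · calc _ ≤ dist f 0 := Metric.infDist_le_dist_of_mem (zero_mem _)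
        _ ≤ ε i := by rw [dist_zero_right, h0]; exact hε0 f hf
    · exact hεk i hpos (by omega) f hf
  refine ⟨J n f, hK ▸ ⟨fun i => lam i (f - J i f), fun i => ?_, ?_⟩, ?_⟩
  · have hε : 0 ≤ ε i := Metric.infDist_nonneg.trans (hdist i)
    calc |lam i (f - J i f)| ≤ ‖f - J i f‖ :=
          ((lam i).le_of_opNorm_le (hlam i) _).trans_eq (one_mul _)
      _ ≤ (1 + ‖J i‖) * Metric.infDist f (spanBelow ℝ q i) :=
        norm_sub_apply_le_one_add_opNorm_mul_infDist _ ⟨0, zero_mem _⟩ (hfix i) f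
      _ ≤ (1 + ‖J i‖) * ε i := by gcongr; exact hdist i
      _ ≤ α * ((1 + ‖J i‖) * ε i) := le_mul_of_one_le_left (mul_nonneg (by positivity) hε) hα
  · simpa using apply_eq_sum_residual_smul hbio hJ0 hrange hinterp f le_rfl
  · refine (Finset.sum_congr rfl fun i _ => ?_).le
    rw [hinterp n le_rfl f i i.isLt, hη]
    ring

/-- The optimal value of the CS-GEIM least-squares problem is controlled
by the noise: with `‖λ_k‖ ≤ 1`, `f ∈ S` where `sup_{g∈S} dist(g, X_k) ≤ ε_k` for
`0 ≤ k ≤ n−1` (`ε₀ = sup_{g∈S} ‖g‖`), `α ≥ 1`, and noisy data `ηᵢ = λᵢ(f) + eᵢ`, one has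
`min_{v ∈ Kₙ(α)} Σᵢ (λᵢ(v) − ηᵢ)² ≤ Σᵢ eᵢ²`, where
`Kₙ(α) = { Σᵢ cᵢ qᵢ : |cᵢ| ≤ α (1 + Λ_{i-1}) ε_{i-1} }` (0-based: `|c i| ≤ α (1+‖J i‖) ε i`). -/
theorem csgeim_optimal_value_noise_bound
    {X : Type*} [NormedAddCommGroup X] [NormedSpace ℝ X] [CompleteSpace X]
    (n : ℕ) (q : Fin n → X) (lam : Fin n → X →L[ℝ] ℝ)
    (hlam : ∀ i : Fin n, ‖lam i‖ ≤ 1)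
    (hbio : ∀ i j : Fin n, j ≤ i → lam j (q i) = if i = j then 1 else 0)
    (J : ℕ → X →L[ℝ] X)
    (hJ0 : J 0 = 0)
    (hrange : ∀ k, k ≤ n → ∀ f : X,
      J k f ∈ Submodule.span ℝ (q '' {i : Fin n | (i : ℕ) < k}))
    (hinterp : ∀ k, k ≤ n → ∀ f : X, ∀ i : Fin n, (i : ℕ) < k →
      lam i (J k f) = lam i f)
    (S : Set X) (ε : ℕ → ℝ)
    (hε0 : ∀ g ∈ S, ‖g‖ ≤ ε 0)
    (hεk : ∀ k, 1 ≤ k → k ≤ n - 1 → ∀ g ∈ S,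
      Metric.infDist g (Submodule.span ℝ (q '' {i : Fin n | (i : ℕ) < k}) : Set X) ≤ ε k)
    (α : ℝ) (hα : 1 ≤ α)
    (f : X) (hf : f ∈ S) (e η : Fin n → ℝ)
    (hη : ∀ i : Fin n, η i = lam i f + e i)
    (K : Set X)
    (hK : K = {v : X | ∃ c : Fin n → ℝ,
      (∀ i : Fin n, |c i| ≤ α * ((1 + ‖J (i : ℕ)‖) * ε (i : ℕ))) ∧
      v = ∑ i : Fin n, c i • q i}) :
    ∃ v ∈ K, ∑ i : Fin n, (lam i v - η i) ^ 2 ≤ ∑ i : Fin n, (e i) ^ 2 :=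
  csgeim_optimal_value_noise_bound_general n q lam hlam hbio J hJ0 hrange hinterp S ε hε0 hεk α hα f
    hf e η hη K hK
end

section
/- Measurement-consistency of the CS-GEIM minimizer: under the hypotheses of the optimal-value bound (‖λ_k‖_{X'} ≤ 1, f ∈ S with dist(f, X_k) ≤ ε_k for 0 ≤ k ≤ n−1, α ≥ 1, η_i = λ_i(f) + e_i), any minimizer v* of v ↦ Σ_{i=1}^n (λ_i(v) − η_i)² over K_n(α) satisfies Σ_{i=1}^n (λ_i(v*) − λ_i(f))² ≤ 4 Σ_{i=1}^n e_i². -/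
/-!
The interpolant `w := J n f` is itself an admissible competitor, and it reproduces the
measurements of `f` exactly, so its misfit is `∑ eᵢ²`; the misfit of `v⋆` is no larger, and
`(a + b)² ≤ 2a² + 2b²` gives the factor `4`.

Admissibility is the content. Lower unitriangularity makes interpolation on
`span {q_j | j < k}` unique, so `J k` is a projection onto that span, whence
`‖f - J k f‖ ≤ (1 + Λ_k) dist(f, X_k)`; uniqueness also identifies `J i f` with the first `i`
terms of the expansion of `J n f` in the `qⱼ`, which shows
`J n f = ∑ᵢ λᵢ(f - J i f) qᵢ`, whose coefficients are therefore bounded by `(1 + Λᵢ) εᵢ`.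
-/

open Finset Metric

def initialSpan (R : Type*) {M : Type*} [Semiring R] [AddCommMonoid M] [Module R M] {n : ℕ}
    (q : Fin n → M) (k : ℕ) : Submodule R M :=
  Submodule.span R (q '' {i | (i : ℕ) < k})

section Triangular

variable {R M F : Type*} [Semiring R] [AddCommMonoid M] [Module R M] [FunLike F M R]
  [LinearMapClass F R M R] {n : ℕ} {q : Fin n → M} {lam : Fin n → F}

theorem mem_initialSpan_iff {k : ℕ} {v : M} :
    v ∈ initialSpan R q k ↔
      ∃ l : Fin n → R, (∀ i : Fin n, k ≤ i → l i = 0) ∧ ∑ i, l i • q i = v := by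
  classical
  constructor
  · intro hv
    obtain ⟨l, hl, rfl⟩ := (Finsupp.mem_span_image_iff_linearCombination R).1 hv
    refine ⟨l, fun i hi => (Finsupp.mem_supported' R l).1 hl i (by simpa using hi), ?_⟩
    rw [Finsupp.linearCombination_apply, Finsupp.sum_fintype _ _ (by simp)]
  · rintro ⟨l, hl, rfl⟩
    refine Submodule.sum_mem _ fun i _ => ?_
    by_cases hi : (i : ℕ) < k
    · exact Submodule.smul_mem _ _ (Submodule.subset_span ⟨i, hi, rfl⟩)
    · simp [hl i (not_lt.1 hi)]

variable (hbio : ∀ i j : Fin n, j ≤ i → lam j (q i) = if i = j then 1 else 0)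
include hbio

theorem apply_sum_smul_congr {i : Fin n} {l l' : Fin n → R} (h : ∀ j ≤ i, l j = l' j) :
    lam i (∑ j, l j • q j) = lam i (∑ j, l' j • q j) := by
  simp only [map_sum, map_smul]
  refine sum_congr rfl fun j _ => ?_
  rcases le_or_gt j i with hji | hij
  · rw [h j hji]
  · simp [hbio j i hij.le, hij.ne']

theorem apply_sum_smul_of_forall_lt {i : Fin n} {l : Fin n → R} (h : ∀ j < i, l j = 0) :
    lam i (∑ j, l j • q j) = l i := by
  simp only [map_sum, map_smul]
  refine (sum_eq_single i (fun j _ hji => ?_) (by simp)).trans (by simp [hbio i i le_rfl])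
  rcases hji.lt_or_gt with hji | hij
  · simp [h j hji]
  · simp [hbio j i hij.le, hij.ne']

theorem eq_zero_of_mem_initialSpan {k : ℕ} {v : M} (hv : v ∈ initialSpan R q k)
    (h : ∀ j : Fin n, (j : ℕ) < k → lam j v = 0) : v = 0 := by
  obtain ⟨l, hl, rfl⟩ := mem_initialSpan_iff.1 hv
  have hl0 : ∀ j, l j = 0 := by
    intro j
    induction j using WellFoundedLT.induction with
    | ind j ih =>
      by_cases hj : (j : ℕ) < k
      · rw [← apply_sum_smul_of_forall_lt hbio ih]; exact h j hj
      · exact hl j (not_lt.1 hj)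
  simp [hl0]

end Triangular

section TriangularRing

variable {R M F : Type*} [Ring R] [AddCommGroup M] [Module R M] [FunLike F M R]
  [LinearMapClass F R M R] {n : ℕ} {q : Fin n → M} {lam : Fin n → F}
  (hbio : ∀ i j : Fin n, j ≤ i → lam j (q i) = if i = j then 1 else 0)
include hbio

theorem eq_of_mem_initialSpan {k : ℕ} {u v : M} (hu : u ∈ initialSpan R q k)
    (hv : v ∈ initialSpan R q k) (h : ∀ j : Fin n, (j : ℕ) < k → lam j u = lam j v) :
    u = v :=
  sub_eq_zero.1 <| eq_zero_of_mem_initialSpan hbio (sub_mem hu hv) fun j hj => by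
    rw [map_sub, h j hj, sub_self]

theorem eq_sum_apply_sub_smul {x : M} {g : ℕ → M} (hg : ∀ k ≤ n, g k ∈ initialSpan R q k)
    (hgx : ∀ k ≤ n, ∀ j : Fin n, (j : ℕ) < k → lam j (g k) = lam j x) :
    g n = ∑ i, lam i (x - g i) • q i := by
  obtain ⟨d, -, hd⟩ := mem_initialSpan_iff.1 (hg n le_rfl)
  rw [← hd]
  refine sum_congr rfl fun i _ => ?_
  set t : Fin n → R := fun j => if j < i then d j else 0
  have ht : ∑ j, t j • q j = g i := by
    refine eq_of_mem_initialSpan hbio (mem_initialSpan_iff.2 ⟨t, fun j hj => ?_, rfl⟩)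
      (hg i i.is_lt.le) fun j hj => ?_
    · exact if_neg (not_lt.2 (Fin.le_iff_val_le_val.2 hj))
    · rw [apply_sum_smul_congr hbio (l' := d) fun m hm => if_pos (hm.trans_lt hj), hd,
        hgx n le_rfl j j.is_lt, hgx i i.is_lt.le j hj]
  have hdt : ∀ j < i, d j - t j = 0 := fun j hj => by simp [t, hj]
  rw [map_sub, ← hgx n le_rfl i i.is_lt, ← hd, ← ht, ← map_sub, ← sum_sub_distrib]
  simp_rw [← sub_smul]
  rw [apply_sum_smul_of_forall_lt hbio hdt]
  simp [t]

end TriangularRing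

theorem norm_sub_apply_le_mul_infDist_s13 {𝕜 E : Type*} [NontriviallyNormedField 𝕜]
    [SeminormedAddCommGroup E] [NormedSpace 𝕜 E] (P : E →L[𝕜] E) {s : Set E}
    (hs : s.Nonempty) (hP : ∀ p ∈ s, P p = p) (x : E) :
    ‖x - P x‖ ≤ (1 + ‖P‖) * infDist x s := by
  rw [mul_comm, ← div_le_iff₀ (by positivity), le_infDist hs]
  intro p hp
  rw [div_le_iff₀ (by positivity), dist_eq_norm]
  calc ‖x - P x‖ = ‖(x - p) - P (x - p)‖ := by rw [map_sub, hP p hp]; abel_nf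
    _ ≤ ‖x - p‖ + ‖P‖ * ‖x - p‖ := (norm_sub_le _ _).trans (by gcongr; exact P.le_opNorm _)
    _ = ‖x - p‖ * (1 + ‖P‖) := by ring

theorem sum_sq_sub_le_four_mul_sum_sq {ι : Type*} (s : Finset ι) (a b e : ι → ℝ)
    (h : ∑ i ∈ s, (a i - (b i + e i)) ^ 2 ≤ ∑ i ∈ s, e i ^ 2) :
    ∑ i ∈ s, (a i - b i) ^ 2 ≤ 4 * ∑ i ∈ s, e i ^ 2 :=
  calc ∑ i ∈ s, (a i - b i) ^ 2 ≤ ∑ i ∈ s, (2 * (a i - (b i + e i)) ^ 2 + 2 * e i ^ 2) :=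
        sum_le_sum fun i _ => by nlinarith [sq_nonneg (a i - b i - 2 * e i)]
    _ = 2 * ∑ i ∈ s, (a i - (b i + e i)) ^ 2 + 2 * ∑ i ∈ s, e i ^ 2 := by
        rw [sum_add_distrib, mul_sum, mul_sum]
    _ ≤ 4 * ∑ i ∈ s, e i ^ 2 := by linarith

theorem csgeim_minimizer_measurement_consistency_general
    {X : Type*} [NormedAddCommGroup X] [NormedSpace ℝ X]
    (n : ℕ) (q : Fin n → X) (lam : Fin n → X →L[ℝ] ℝ)
    (hlam : ∀ i : Fin n, ‖lam i‖ ≤ 1)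
    (hbio : ∀ i j : Fin n, j ≤ i → lam j (q i) = if i = j then 1 else 0)
    (J : ℕ → X →L[ℝ] X)
    (hrange : ∀ k, k ≤ n → ∀ f : X,
      J k f ∈ Submodule.span ℝ (q '' {i : Fin n | (i : ℕ) < k}))
    (hinterp : ∀ k, k ≤ n → ∀ f : X, ∀ i : Fin n, (i : ℕ) < k →
      lam i (J k f) = lam i f)
    (S : Set X) (ε : ℕ → ℝ)
    (hε0 : ∀ g ∈ S, ‖g‖ ≤ ε 0)
    (hεk : ∀ k, 1 ≤ k → k ≤ n - 1 → ∀ g ∈ S,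
      Metric.infDist g (Submodule.span ℝ (q '' {i : Fin n | (i : ℕ) < k}) : Set X) ≤ ε k)
    (α : ℝ) (hα : 1 ≤ α)
    (f : X) (hf : f ∈ S) (e η : Fin n → ℝ)
    (hη : ∀ i : Fin n, η i = lam i f + e i)
    (K : Set X)
    (hK : K = {v : X | ∃ c : Fin n → ℝ,
      (∀ i : Fin n, |c i| ≤ α * ((1 + ‖J (i : ℕ)‖) * ε (i : ℕ))) ∧
      v = ∑ i : Fin n, c i • q i})
    (vstar : X)
    (hvmin : ∀ w ∈ K,
      ∑ i : Fin n, (lam i vstar - η i) ^ 2 ≤ ∑ i : Fin n, (lam i w - η i) ^ 2) :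
    ∑ i : Fin n, (lam i vstar - lam i f) ^ 2 ≤ 4 * ∑ i : Fin n, (e i) ^ 2 := by
  have hdist : ∀ i : Fin n, infDist f (initialSpan ℝ q i) ≤ ε i := fun i => by
    rcases Nat.eq_zero_or_pos i with hi | hi
    · simpa [initialSpan, hi] using hε0 f hf
    · exact hεk i hi (Nat.le_pred_of_lt i.is_lt) f hf
  have hproj : ∀ i : Fin n, ∀ p ∈ initialSpan ℝ q i, J i p = p := fun i p hp =>
    eq_of_mem_initialSpan hbio (hrange i i.is_lt.le p) hp (hinterp i i.is_lt.le p)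
  have hcoeff : ∀ i : Fin n, |lam i (f - J i f)| ≤ α * ((1 + ‖J i‖) * ε i) := fun i =>
    calc |lam i (f - J i f)| ≤ ‖f - J i f‖ :=
          ((lam i).le_of_opNorm_le (hlam i) _).trans_eq (one_mul _)
      _ ≤ (1 + ‖J i‖) * infDist f (initialSpan ℝ q i) :=
          norm_sub_apply_le_mul_infDist_s13 (J i) ⟨0, zero_mem _⟩ (hproj i) f
      _ ≤ (1 + ‖J i‖) * ε i := by gcongr; exact hdist i
      _ ≤ α * ((1 + ‖J i‖) * ε i) :=
          le_mul_of_one_le_left (mul_nonneg (by positivity) (infDist_nonneg.trans (hdist i))) hα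
  have hJf : J n f ∈ K := hK ▸ ⟨_, hcoeff,
    eq_sum_apply_sub_smul hbio (fun k hk => hrange k hk f) (fun k hk => hinterp k hk f)⟩
  have hopt := hvmin _ hJf
  simp only [hη, hinterp n le_rfl f _ (Fin.is_lt _), sub_add_cancel_left, even_two, Even.neg_pow]
    at hopt
  exact sum_sq_sub_le_four_mul_sum_sq _ _ _ _ hopt

/-- Measurement-consistency of the CS-GEIM minimizer: under the hypotheses
of the optimal-value bound (`‖λ_k‖ ≤ 1`, `f ∈ S` with `dist(f, X_k) ≤ ε_k` for
`0 ≤ k ≤ n−1`, `α ≥ 1`, `ηᵢ = λᵢ(f) + eᵢ`), any minimizer `v⋆` of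
`v ↦ Σᵢ (λᵢ(v) − ηᵢ)²` over `Kₙ(α)` satisfies `Σᵢ (λᵢ(v⋆) − λᵢ(f))² ≤ 4 Σᵢ eᵢ²`. -/
theorem csgeim_minimizer_measurement_consistency
    {X : Type*} [NormedAddCommGroup X] [NormedSpace ℝ X] [CompleteSpace X]
    (n : ℕ) (q : Fin n → X) (lam : Fin n → X →L[ℝ] ℝ)
    (hlam : ∀ i : Fin n, ‖lam i‖ ≤ 1)
    (hbio : ∀ i j : Fin n, j ≤ i → lam j (q i) = if i = j then 1 else 0)
    (J : ℕ → X →L[ℝ] X)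
    (hJ0 : J 0 = 0)
    (hrange : ∀ k, k ≤ n → ∀ f : X,
      J k f ∈ Submodule.span ℝ (q '' {i : Fin n | (i : ℕ) < k}))
    (hinterp : ∀ k, k ≤ n → ∀ f : X, ∀ i : Fin n, (i : ℕ) < k →
      lam i (J k f) = lam i f)
    (S : Set X) (ε : ℕ → ℝ)
    (hε0 : ∀ g ∈ S, ‖g‖ ≤ ε 0)
    (hεk : ∀ k, 1 ≤ k → k ≤ n - 1 → ∀ g ∈ S,
      Metric.infDist g (Submodule.span ℝ (q '' {i : Fin n | (i : ℕ) < k}) : Set X) ≤ ε k)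
    (α : ℝ) (hα : 1 ≤ α)
    (f : X) (hf : f ∈ S) (e η : Fin n → ℝ)
    (hη : ∀ i : Fin n, η i = lam i f + e i)
    (K : Set X)
    (hK : K = {v : X | ∃ c : Fin n → ℝ,
      (∀ i : Fin n, |c i| ≤ α * ((1 + ‖J (i : ℕ)‖) * ε (i : ℕ))) ∧
      v = ∑ i : Fin n, c i • q i})
    (vstar : X) (hvK : vstar ∈ K)
    (hvmin : ∀ w ∈ K,
      ∑ i : Fin n, (lam i vstar - η i) ^ 2 ≤ ∑ i : Fin n, (lam i w - η i) ^ 2) :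
    ∑ i : Fin n, (lam i vstar - lam i f) ^ 2 ≤ 4 * ∑ i : Fin n, (e i) ^ 2 :=
  csgeim_minimizer_measurement_consistency_general n q lam hlam hbio J hrange hinterp S ε hε0 hεk α
    hα f hf e η hη K hK vstar hvmin
end
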